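/- arXiv:1511.04152 — 2 statements merged into one kernel-verified Lean document; each statement's English description precedes it below -/
import Mathlib

section
/- Conversely, if the deformation γ ↦ γ̄ of discrete plane curves preserves all turning angles (κ̄ₙ = κₙ for all n), then there exist a positive function Hₙ and an n-independent angle a such that T̄ₙ = Hₙ φₙ (cos a, sin a)ᵀ. -/
/-!
Normalize the tangents: `uₙ = Tₙ / qₙ` and `ūₙ = T̄ₙ / q̄ₙ` are unit vectors, and both obey
`uₙ₊₁ = R(κₙ₊₁) uₙ` with the same turning angles. Choose `a` with `ū₀ = R(a) u₀`; since planar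
rotations commute, `ūₙ = R(a) uₙ` propagates in both directions along `ℤ`. Hence
`T̄ₙ = (q̄ₙ / qₙ) R(a) Tₙ`, and `R(a) Tₙ = φₙ (cos a, sin a)ᵀ`.
-/

/-- Rotation matrix by angle `θ`. -/
noncomputable def rot (θ : ℝ) : Matrix (Fin 2) (Fin 2) ℝ :=
  !![Real.cos θ, -Real.sin θ; Real.sin θ, Real.cos θ]

/-- Similarity Frenet frame `φₙ = [Tₙ, R(π/2)Tₙ]` of a discrete curve. -/
noncomputable def simFrame (γ : ℤ → Fin 2 → ℝ) (n : ℤ) : Matrix (Fin 2) (Fin 2) ℝ :=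
  !![γ (n+1) 0 - γ n 0, -(γ (n+1) 1 - γ n 1);
     γ (n+1) 1 - γ n 1,   γ (n+1) 0 - γ n 0]

lemma rot_mul (θ φ : ℝ) : rot θ * rot φ = rot (θ + φ) := by
  ext i j
  fin_cases i <;> fin_cases j <;>
    simp [rot, Matrix.mul_apply, Fin.sum_univ_two, Real.cos_add, Real.sin_add] <;> ring

lemma rot_zero : rot 0 = 1 := by
  ext i j
  fin_cases i <;> fin_cases j <;> simp [rot]

lemma rot_mulVec_rot_mulVec (θ φ : ℝ) (v : Fin 2 → ℝ) :
    (rot θ).mulVec ((rot φ).mulVec v) = (rot (θ + φ)).mulVec v := by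
  rw [Matrix.mulVec_mulVec, rot_mul]

lemma rot_neg_mulVec_rot_mulVec (θ : ℝ) (v : Fin 2 → ℝ) :
    (rot (-θ)).mulVec ((rot θ).mulVec v) = v := by
  rw [rot_mulVec_rot_mulVec, neg_add_cancel, rot_zero, Matrix.one_mulVec]

lemma rot_mulVec_comm (θ φ : ℝ) (v : Fin 2 → ℝ) :
    (rot θ).mulVec ((rot φ).mulVec v) = (rot φ).mulVec ((rot θ).mulVec v) := by
  rw [rot_mulVec_rot_mulVec, rot_mulVec_rot_mulVec, add_comm]

lemma simFrame_mulVec_cos_sin (γ : ℤ → Fin 2 → ℝ) (n : ℤ) (a : ℝ) :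
    (simFrame γ n).mulVec ![Real.cos a, Real.sin a] = (rot a).mulVec (γ (n+1) - γ n) := by
  ext i
  fin_cases i <;> simp [simFrame, rot, Matrix.mulVec, dotProduct, Fin.sum_univ_two] <;> ring

lemma exists_cos_sin_eq {x y : ℝ} (h : x ^ 2 + y ^ 2 = 1) :
    ∃ θ : ℝ, Real.cos θ = x ∧ Real.sin θ = y := by
  have hnorm : ‖(⟨x, y⟩ : ℂ)‖ = 1 := by
    rw [Complex.norm_def, Complex.normSq_mk, ← sq, ← sq, h, Real.sqrt_one]
  refine ⟨Complex.arg ⟨x, y⟩, ?_, ?_⟩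
  · simpa [hnorm] using Complex.norm_mul_cos_arg ⟨x, y⟩
  · simpa [hnorm] using Complex.norm_mul_sin_arg ⟨x, y⟩

lemma exists_rot_mulVec_eq {u v : Fin 2 → ℝ} (hu : u 0 ^ 2 + u 1 ^ 2 = 1)
    (hv : v 0 ^ 2 + v 1 ^ 2 = 1) : ∃ a : ℝ, (rot a).mulVec u = v := by
  -- `cos a = u ⬝ v` and `sin a = u × v`; Lagrange's identity makes this a unit vector.
  obtain ⟨a, hcos, hsin⟩ := exists_cos_sin_eq (x := u 0 * v 0 + u 1 * v 1)
    (y := u 0 * v 1 - u 1 * v 0) (by linear_combination (v 0 ^ 2 + v 1 ^ 2) * hu + hv)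
  refine ⟨a, ?_⟩
  ext i
  fin_cases i <;> simp [rot, Matrix.mulVec, dotProduct, Fin.sum_univ_two, hcos, hsin]
  · linear_combination v 0 * hu
  · linear_combination v 1 * hu

lemma rot_mulVec_eq_of_rot_recurrence (κ : ℤ → ℝ) (u v : ℤ → Fin 2 → ℝ) (a : ℝ)
    (hu : ∀ n, u (n + 1) = (rot (κ (n + 1))).mulVec (u n))
    (hv : ∀ n, v (n + 1) = (rot (κ (n + 1))).mulVec (v n))
    (h₀ : v 0 = (rot a).mulVec (u 0)) (n : ℤ) : v n = (rot a).mulVec (u n) := by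
  have back (w : ℤ → Fin 2 → ℝ) (hw : ∀ n, w (n + 1) = (rot (κ (n + 1))).mulVec (w n)) (n : ℤ) :
      w (n - 1) = (rot (-κ n)).mulVec (w n) := by
    rw [← sub_add_cancel n 1, hw, sub_add_cancel, rot_neg_mulVec_rot_mulVec]
  induction n using Int.induction_on with
  | zero => exact h₀
  | succ n ih => rw [hu, hv, ih, rot_mulVec_comm]
  | pred n ih => rw [back u hu, back v hv, ih, rot_mulVec_comm]

lemma inv_smul_sq_add_sq_eq_one {w : Fin 2 → ℝ} {r : ℝ} (hr : r = Real.sqrt (w 0 ^ 2 + w 1 ^ 2))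
    (hr0 : 0 < r) : (r⁻¹ • w) 0 ^ 2 + (r⁻¹ • w) 1 ^ 2 = 1 := by
  have hsq : r ^ 2 = w 0 ^ 2 + w 1 ^ 2 := by rw [hr, Real.sq_sqrt (by positivity)]
  simp only [Pi.smul_apply, smul_eq_mul, mul_pow, ← mul_add, inv_pow, ← hsq]
  exact inv_mul_cancel₀ (by positivity)

theorem stmt11_general (γ γb : ℤ → Fin 2 → ℝ) (q qb κ κb : ℤ → ℝ)
    (hq : ∀ n, q n = Real.sqrt ((γ (n+1) 0 - γ n 0) ^ 2 + (γ (n+1) 1 - γ n 1) ^ 2))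
    (hqb : ∀ n, qb n = Real.sqrt ((γb (n+1) 0 - γb n 0) ^ 2 + (γb (n+1) 1 - γb n 1) ^ 2))
    (hqpos : ∀ n, 0 < q n) (hqbpos : ∀ n, 0 < qb n)
    (hrot : ∀ n, (q n)⁻¹ • (γ (n+1) - γ n)
      = (rot (κ n)).mulVec ((q (n-1))⁻¹ • (γ n - γ (n-1))))
    (hrotb : ∀ n, (qb n)⁻¹ • (γb (n+1) - γb n)
      = (rot (κb n)).mulVec ((qb (n-1))⁻¹ • (γb n - γb (n-1))))
    (hiso : ∀ n, κb n = κ n) :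
    ∃ H : ℤ → ℝ, (∀ n, 0 < H n) ∧ ∃ a : ℝ,
      ∀ n, γb (n+1) - γb n = H n • (simFrame γ n).mulVec ![Real.cos a, Real.sin a] := by
  set u : ℤ → Fin 2 → ℝ := fun n => (q n)⁻¹ • (γ (n+1) - γ n)
  set ub : ℤ → Fin 2 → ℝ := fun n => (qb n)⁻¹ • (γb (n+1) - γb n)
  obtain ⟨a, ha⟩ := exists_rot_mulVec_eq
    (inv_smul_sq_add_sq_eq_one (w := γ (0+1) - γ 0) (hq 0) (hqpos 0))
    (inv_smul_sq_add_sq_eq_one (w := γb (0+1) - γb 0) (hqb 0) (hqbpos 0))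
  have hub : ∀ n, ub n = (rot a).mulVec (u n) :=
    rot_mulVec_eq_of_rot_recurrence κ u ub a
      (fun n => by simpa only [add_sub_cancel_right] using hrot (n + 1))
      (fun n => by simpa only [hiso, add_sub_cancel_right] using hrotb (n + 1)) ha.symm
  refine ⟨fun n => qb n / q n, fun n => div_pos (hqbpos n) (hqpos n), a, fun n => ?_⟩
  have hTb : γb (n+1) - γb n = qb n • ub n := by simp [ub, smul_smul, (hqbpos n).ne']
  show _ = (qb n / q n) • _
  rw [hTb, hub, simFrame_mulVec_cos_sin, Matrix.mulVec_smul, smul_smul, div_eq_mul_inv]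

/-- If a deformation of discrete plane curves preserves all turning angles (`κ̄ₙ = κₙ`),
then there are `Hₙ > 0` and an `n`-independent angle `a` with
`T̄ₙ = Hₙ φₙ (cos a, sin a)ᵀ`. -/
theorem stmt11 (γ γb : ℤ → Fin 2 → ℝ) (q qb κ κb : ℤ → ℝ)
    (hq : ∀ n, q n = Real.sqrt ((γ (n+1) 0 - γ n 0) ^ 2 + (γ (n+1) 1 - γ n 1) ^ 2))
    (hqb : ∀ n, qb n = Real.sqrt ((γb (n+1) 0 - γb n 0) ^ 2 + (γb (n+1) 1 - γb n 1) ^ 2))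
    (hqpos : ∀ n, 0 < q n) (hqbpos : ∀ n, 0 < qb n)
    (hκ : ∀ n, κ n ∈ Set.Ioo (0 : ℝ) (2 * Real.pi))
    (hκb : ∀ n, κb n ∈ Set.Ioo (0 : ℝ) (2 * Real.pi))
    (hrot : ∀ n, (q n)⁻¹ • (γ (n+1) - γ n)
      = (rot (κ n)).mulVec ((q (n-1))⁻¹ • (γ n - γ (n-1))))
    (hrotb : ∀ n, (qb n)⁻¹ • (γb (n+1) - γb n)
      = (rot (κb n)).mulVec ((qb (n-1))⁻¹ • (γb n - γb (n-1))))
    (hiso : ∀ n, κb n = κ n) :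
    ∃ H : ℤ → ℝ, (∀ n, 0 < H n) ∧ ∃ a : ℝ,
      ∀ n, γb (n+1) - γb n = H n • (simFrame γ n).mulVec ![Real.cos a, Real.sin a] :=
  stmt11_general γ γb q qb κ κb hq hqb hqpos hqbpos hrot hrotb hiso
end

section
/- Let q^m_n > 0 satisfy the discrete heat equation (q^{m+1}_n - q^m_n)/δ = (q^m_{n+1} - 2 q^m_n cos ε + q^m_{n-1})/ε², with δ, ε > 0. Then u^m_n = q^m_{n+1}/q^m_n satisfies the discrete Burgers equation u^{m+1}_n / u^m_n = [1 + (δ/ε²)(u^m_{n+1} - 2cos ε + 1/u^m_n)] / [1 + (δ/ε²)(u^m_n - 2cos ε + 1/u^m_{n-1})], assuming the denominators are nonzero. -/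
/-! The heat equation says that one time step multiplies `q^m_n` by
`1 + (δ/ε²)(u^m_n - 2 cos ε + 1/u^m_{n-1})`, a factor that only involves `u`; so the ratio
`u^{m+1}_n / u^m_n` of consecutive quotients is the quotient of the factors at `n + 1` and `n`. -/

theorem discreteHeat_succ_eq_mul {K : Type*} [Field K] {δ h c : K} (hδ : δ ≠ 0) {q u : ℤ → ℤ → K}
    (hq : ∀ m n, q m n ≠ 0)
    (heat : ∀ m n, (q (m+1) n - q m n) / δ = (q m (n+1) - 2 * q m n * c + q m (n-1)) / h)
    (hu : ∀ m n, u m n = q m (n+1) / q m n) (m n : ℤ) :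
    q (m+1) n = q m n * (1 + δ / h * (u m n - 2 * c + 1 / u m (n-1))) := by
  have hu' : u m (n-1) = q m n / q m (n-1) := by simpa using hu m (n-1)
  have hstep : q (m+1) n - q m n = δ / h * (q m (n+1) - 2 * q m n * c + q m (n-1)) := by
    have := heat m n
    rw [div_eq_iff hδ] at this
    linear_combination this
  have hfactor : q m n * (u m n - 2 * c + 1 / u m (n-1))
      = q m (n+1) - 2 * q m n * c + q m (n-1) := by
    rw [hu m n, hu']
    field_simp [hq m n, hq m (n-1)]
  linear_combination hstep - δ / h * hfactor

theorem stmt13_general (δ ε : ℝ) (hδ : 0 < δ)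
    (q : ℤ → ℤ → ℝ) (hq : ∀ m n, 0 < q m n)
    (heat : ∀ m n, (q (m+1) n - q m n) / δ
      = (q m (n+1) - 2 * q m n * Real.cos ε + q m (n-1)) / ε ^ 2)
    (u : ℤ → ℤ → ℝ) (hu : ∀ m n, u m n = q m (n+1) / q m n) :
    ∀ m n, u (m+1) n / u m n
      = (1 + δ / ε ^ 2 * (u m (n+1) - 2 * Real.cos ε + 1 / u m n))
        / (1 + δ / ε ^ 2 * (u m n - 2 * Real.cos ε + 1 / u m (n-1))) := by
  intro m n
  have hq_ne : ∀ m n, q m n ≠ 0 := fun m n => (hq m n).ne'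
  have step := discreteHeat_succ_eq_mul hδ.ne' hq_ne heat hu m
  rw [hu (m+1) n, step n, step (n+1), add_sub_cancel_right, hu m n, mul_div_mul_comm,
    mul_div_cancel_left₀ _ (div_ne_zero (hq_ne m (n+1)) (hq_ne m n))]

/-- If `q^m_n > 0` solves the discrete heat equation
`(q^{m+1}_n - q^m_n)/δ = (q^m_{n+1} - 2 q^m_n cos ε + q^m_{n-1})/ε²`, then
`u^m_n = q^m_{n+1}/q^m_n` solves the discrete Burgers equation. -/
theorem stmt13 (δ ε : ℝ) (hδ : 0 < δ) (hε : 0 < ε)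
    (q : ℤ → ℤ → ℝ) (hq : ∀ m n, 0 < q m n)
    (heat : ∀ m n, (q (m+1) n - q m n) / δ
      = (q m (n+1) - 2 * q m n * Real.cos ε + q m (n-1)) / ε ^ 2)
    (u : ℤ → ℤ → ℝ) (hu : ∀ m n, u m n = q m (n+1) / q m n)
    (hden : ∀ m n, 1 + δ / ε ^ 2 * (u m n - 2 * Real.cos ε + 1 / u m (n-1)) ≠ 0) :
    ∀ m n, u (m+1) n / u m n
      = (1 + δ / ε ^ 2 * (u m (n+1) - 2 * Real.cos ε + 1 / u m n))
        / (1 + δ / ε ^ 2 * (u m n - 2 * Real.cos ε + 1 / u m (n-1))) :=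
  stmt13_general δ ε hδ q hq heat u hu
end
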